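/- Discrete kinetic energy evolution identity: Assume N_v ≥ 2 and fix a species s. Suppose the fully discrete Fourier–Hermite Vlasov equations hold for species s at the indices (n,k) = (0,0), (1,0), and (2,0). Then 𝓔_k^{s,j+1} = 𝓔_k^{s,j} + Δt·q^s·α^s·L·Σ_{ℓ=−N_x}^{N_x} ((α^s/√2)·Ĉ^{s,j+1/2}_{1,ℓ} + u^s·Ĉ^{s,j+1/2}_{0,ℓ})·Ê^{j+1/2}_{−ℓ}. -/

import Mathlib

open Finset

/-- Implicit midpoint value `X^{j+1/2} = (X^j + X^{j+1})/2`. -/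
noncomputable def midpt (a b : ℂ) : ℂ := (a + b) / 2

/-- The fully discrete Fourier–Hermite Vlasov equation with implicit midpoint
time stepping at index `(n,k)` for one species with mass `ms`, charge `qs`, and
Hermite parameters `αs`, `us`.  `Cj Cj1 : ℤ → ℤ → ℂ` are the Hermite–Fourier
coefficients of the distribution function at time levels `j` and `j+1`, and
`Ej Ej1 : ℤ → ℂ` those of the electric field. -/
noncomputable def vlasovEq (Nx : ℕ) (L Δt ms qs αs us : ℝ)
    (Cj Cj1 : ℤ → ℤ → ℂ) (Ej Ej1 : ℤ → ℂ) (n k : ℤ) : Prop :=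
  (Cj1 n k - Cj n k) / (Δt : ℂ)
    + (Real.sqrt ((n : ℝ) / 2) : ℂ) * (2 * (Real.pi : ℂ) * Complex.I * (k : ℂ) / (L : ℂ)) *
        (αs : ℂ) * midpt (Cj (n - 1) k) (Cj1 (n - 1) k)
    + (2 * (Real.pi : ℂ) * Complex.I * (k : ℂ) / (L : ℂ)) * (us : ℂ) *
        midpt (Cj n k) (Cj1 n k)
    + (Real.sqrt (((n : ℝ) + 1) / 2) : ℂ) * (2 * (Real.pi : ℂ) * Complex.I * (k : ℂ) / (L : ℂ)) *
        (αs : ℂ) * midpt (Cj (n + 1) k) (Cj1 (n + 1) k)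
    - (Real.sqrt (2 * (n : ℝ)) : ℂ) * ((qs : ℂ) / ((ms : ℂ) * (αs : ℂ))) *
        ∑ ℓ ∈ Finset.Icc (-(Nx : ℤ)) (Nx : ℤ),
          midpt (Cj (n - 1) ℓ) (Cj1 (n - 1) ℓ) * midpt (Ej (k - ℓ)) (Ej1 (k - ℓ))
    = 0

/-- Discrete kinetic energy of a species at a time level with coefficients `C`. -/
noncomputable def kineticEnergy (L ms αs us : ℝ) (C : ℤ → ℤ → ℂ) : ℂ :=
  ((ms : ℂ) * (αs : ℂ) * (L : ℂ) / 2) *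
    (((us : ℂ) ^ 2 + (αs : ℂ) ^ 2 / 2) * C 0 0
      + (Real.sqrt 2 : ℂ) * (us : ℂ) * (αs : ℂ) * C 1 0
      + ((αs : ℂ) ^ 2 / (Real.sqrt 2 : ℂ)) * C 2 0)

/-! At the zero Fourier mode the transport terms of the Vlasov equation vanish, so the Hermite
modes `0, 1, 2` (density, momentum, energy) change only through the field term, which feeds
mode `n` from mode `n - 1` with weight `√(2n)`: the density is conserved and the updates of the
momentum and energy modes are field moments of modes `0` and `1`. The kinetic energy is a fixed
linear combination of these three modes, and collecting terms gives the identity. -/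

section ZeroMode

variable {Nx : ℕ} {L Δt ms qs αs us : ℝ} {Cj Cj1 : ℤ → ℤ → ℂ} {Ej Ej1 : ℤ → ℂ} {n : ℤ}

noncomputable def fieldMoment (Nx : ℕ) (Cj Cj1 : ℤ → ℤ → ℂ) (Ej Ej1 : ℤ → ℂ) (n : ℤ) : ℂ :=
  ∑ ℓ ∈ Icc (-(Nx : ℤ)) Nx, midpt (Cj n ℓ) (Cj1 n ℓ) * midpt (Ej (-ℓ)) (Ej1 (-ℓ))

theorem vlasovEq.zero_mode (hΔt : (Δt : ℂ) ≠ 0)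
    (h : vlasovEq Nx L Δt ms qs αs us Cj Cj1 Ej Ej1 n 0) :
    Cj1 n 0 = Cj n 0 + Real.sqrt (2 * n) * (Δt * (qs / (ms * αs))) *
      fieldMoment Nx Cj Cj1 Ej Ej1 (n - 1) := by
  unfold vlasovEq at h
  simp only [Int.cast_zero, mul_zero, zero_mul, zero_div, add_zero, zero_sub] at h
  rw [fieldMoment]
  field_simp at h ⊢
  linear_combination h

end ZeroMode

theorem kineticEnergy_of_zero_mode_update (L ms αs us : ℝ) {C C' : ℤ → ℤ → ℂ} {c S₀ S₁ : ℂ}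
    (h₀ : C' 0 0 = C 0 0) (h₁ : C' 1 0 = C 1 0 + Real.sqrt 2 * c * S₀)
    (h₂ : C' 2 0 = C 2 0 + 2 * c * S₁) :
    kineticEnergy L ms αs us C' =
      kineticEnergy L ms αs us C + ms * αs ^ 2 * L * c * (us * S₀ + αs / Real.sqrt 2 * S₁) := by
  have hsqrt : (Real.sqrt 2 : ℂ) * Real.sqrt 2 = 2 := by
    rw [← Complex.ofReal_mul, Real.mul_self_sqrt zero_le_two, Complex.ofReal_ofNat]
  unfold kineticEnergy
  rw [h₀, h₁, h₂]
  linear_combination (ms * αs ^ 2 * L * us * c * S₀ / 2 : ℂ) * hsqrt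

theorem discrete_kinetic_energy_evolution_general (Nx : ℕ)
    (L Δt : ℝ) (hΔt : 0 < Δt)
    (ms qs αs us : ℝ) (hms : 0 < ms) (hαs : 0 < αs)
    (Cj Cj1 : ℤ → ℤ → ℂ) (Ej Ej1 : ℤ → ℂ)
    (hVlasov0 : vlasovEq Nx L Δt ms qs αs us Cj Cj1 Ej Ej1 0 0)
    (hVlasov1 : vlasovEq Nx L Δt ms qs αs us Cj Cj1 Ej Ej1 1 0)
    (hVlasov2 : vlasovEq Nx L Δt ms qs αs us Cj Cj1 Ej Ej1 2 0) :
    kineticEnergy L ms αs us Cj1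
      = kineticEnergy L ms αs us Cj
        + (Δt : ℂ) * (qs : ℂ) * (αs : ℂ) * (L : ℂ) *
          ∑ ℓ ∈ Finset.Icc (-(Nx : ℤ)) (Nx : ℤ),
            (((αs : ℂ) / (Real.sqrt 2 : ℂ)) * midpt (Cj 1 ℓ) (Cj1 1 ℓ)
              + (us : ℂ) * midpt (Cj 0 ℓ) (Cj1 0 ℓ)) * midpt (Ej (-ℓ)) (Ej1 (-ℓ)) := by
  have hΔ : (Δt : ℂ) ≠ 0 := by exact_mod_cast hΔt.ne'
  have hm : (ms : ℂ) ≠ 0 := by exact_mod_cast hms.ne'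
  have hα : (αs : ℂ) ≠ 0 := by exact_mod_cast hαs.ne'
  have hsqrt4 : Real.sqrt (2 * 2) = 2 := Real.sqrt_mul_self zero_le_two
  have h₀ := hVlasov0.zero_mode hΔ
  have h₁ := hVlasov1.zero_mode hΔ
  have h₂ := hVlasov2.zero_mode hΔ
  norm_num [hsqrt4] at h₀ h₁ h₂
  have hsum : ∑ ℓ ∈ Icc (-(Nx : ℤ)) Nx,
        ((αs / Real.sqrt 2 : ℂ) * midpt (Cj 1 ℓ) (Cj1 1 ℓ) + us * midpt (Cj 0 ℓ) (Cj1 0 ℓ)) *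
          midpt (Ej (-ℓ)) (Ej1 (-ℓ)) =
      us * fieldMoment Nx Cj Cj1 Ej Ej1 0 + αs / Real.sqrt 2 * fieldMoment Nx Cj Cj1 Ej Ej1 1 := by
    simp only [fieldMoment, mul_sum, ← sum_add_distrib]
    exact sum_congr rfl fun _ _ ↦ by ring
  rw [kineticEnergy_of_zero_mode_update L ms αs us h₀ h₁ h₂, hsum]
  field_simp

/-- Discrete kinetic energy evolution identity. -/
theorem discrete_kinetic_energy_evolution (Nv Nx : ℕ) (hNv : 2 ≤ Nv)
    (L Δt : ℝ) (hL : 0 < L) (hΔt : 0 < Δt)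
    (ms qs αs us : ℝ) (hms : 0 < ms) (hαs : 0 < αs)
    (Cj Cj1 : ℤ → ℤ → ℂ) (Ej Ej1 : ℤ → ℂ)
    (hCjlo : ∀ k : ℤ, Cj (-1) k = 0) (hCj1lo : ∀ k : ℤ, Cj1 (-1) k = 0)
    (hCjhi : ∀ k : ℤ, Cj ((Nv : ℤ) + 1) k = 0) (hCj1hi : ∀ k : ℤ, Cj1 ((Nv : ℤ) + 1) k = 0)
    (hEj : ∀ k : ℤ, (Nx : ℤ) < |k| → Ej k = 0) (hEj1 : ∀ k : ℤ, (Nx : ℤ) < |k| → Ej1 k = 0)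
    (hVlasov0 : vlasovEq Nx L Δt ms qs αs us Cj Cj1 Ej Ej1 0 0)
    (hVlasov1 : vlasovEq Nx L Δt ms qs αs us Cj Cj1 Ej Ej1 1 0)
    (hVlasov2 : vlasovEq Nx L Δt ms qs αs us Cj Cj1 Ej Ej1 2 0) :
    kineticEnergy L ms αs us Cj1
      = kineticEnergy L ms αs us Cj
        + (Δt : ℂ) * (qs : ℂ) * (αs : ℂ) * (L : ℂ) *
          ∑ ℓ ∈ Finset.Icc (-(Nx : ℤ)) (Nx : ℤ),
            (((αs : ℂ) / (Real.sqrt 2 : ℂ)) * midpt (Cj 1 ℓ) (Cj1 1 ℓ)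
              + (us : ℂ) * midpt (Cj 0 ℓ) (Cj1 0 ℓ)) * midpt (Ej (-ℓ)) (Ej1 (-ℓ)) :=
  discrete_kinetic_energy_evolution_general Nx L Δt hΔt ms qs αs us hms hαs Cj Cj1 Ej Ej1 hVlasov0
    hVlasov1 hVlasov2
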